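/- arXiv:2510.00712 — 3 statements merged into one kernel-verified Lean document; each statement's English description precedes it below -/
import Mathlib

section
/- For a tree T on n vertices (n ≥ 1) and any integer k with 0 ≤ k ≤ n−2, there exists a 2-coloring of the vertices of T such that exactly k edges of T are monochromatic (i.e., join two vertices of the same color). -/
/-!
Fix a root `r` of the tree and a set `S` of edges. Color each vertex `v` by the parity of the
number of edges outside `S` on the unique path from `r` to `v`. The paths to the two ends of an
edge differ by exactly that edge, so the edge is monochromatic iff it lies in `S`. Taking for `S`
any `k` of the `n - 1` edges gives exactly `k` monochromatic edges.
-/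

/-- The number of monochromatic ("bad") edges of `G` under the vertex coloring `c`:
edges whose two endpoints receive the same color. -/
noncomputable def badCount {V : Type*} {α : Type*} (G : SimpleGraph V) (c : V → α) : ℕ :=
  {e ∈ G.edgeSet | (Sym2.map c e).IsDiag}.ncard

namespace SimpleGraph.IsTree

variable {V : Type*} {T : SimpleGraph V}

noncomputable def path (hT : T.IsTree) (u v : V) : T.Walk u v :=
  (hT.existsUnique_path u v).choose

lemma path_isPath (hT : T.IsTree) (u v : V) : (hT.path u v).IsPath :=
  (hT.existsUnique_path u v).choose_spec.1

lemma path_eq_concat_or_concat (hT : T.IsTree) (r : V) {v w : V} (hadj : T.Adj v w) :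
    hT.path r w = (hT.path r v).concat hadj ∨ hT.path r v = (hT.path r w).concat hadj.symm := by
  by_cases hv : v ∈ (hT.path r w).support
  · exact .inl <| hT.isAcyclic.path_concat (hT.path_isPath r v) (hT.path_isPath r w) hadj hv
  · have hw : w ∈ (hT.path r v).support :=
      hT.isAcyclic.mem_support_of_ne_mem_support_of_adj_of_isPath (hT.path_isPath r v)
        (hT.path_isPath r w) hadj hv
    exact .inr <| hT.isAcyclic.path_concat (hT.path_isPath r w) (hT.path_isPath r v)
      hadj.symm hw

noncomputable def potential {A : Type*} [AddMonoid A] (hT : T.IsTree) (r : V) (f : Sym2 V → A)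
    (v : V) : A :=
  ((hT.path r v).edges.map f).sum

lemma potential_adj {A : Type*} [AddMonoid A] (hT : T.IsTree) (r : V) (f : Sym2 V → A)
    {v w : V} (hadj : T.Adj v w) :
    hT.potential r f w = hT.potential r f v + f s(v, w) ∨
      hT.potential r f v = hT.potential r f w + f s(v, w) := by
  unfold potential
  rcases hT.path_eq_concat_or_concat r hadj with h | h
  · left; simp [h]
  · right; simp [h, Sym2.eq_swap]

lemma exists_coloring_adj_eq_iff_mem (hT : T.IsTree) (S : Set (Sym2 V)) :
    ∃ c : V → Fin 2, ∀ ⦃u v : V⦄, T.Adj u v → (c u = c v ↔ s(u, v) ∈ S) := by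
  classical
  let f : Sym2 V → Fin 2 := fun e => if e ∈ S then 0 else 1
  have hf : ∀ e, f e = 0 ↔ e ∈ S := fun e => by by_cases he : e ∈ S <;> simp [f, he]
  refine ⟨hT.potential hT.nonempty.some f, fun u v hadj => ?_⟩
  rw [← hf]
  rcases hT.potential_adj hT.nonempty.some f hadj with h | h
  · rw [h, left_eq_add]
  · rw [h, add_eq_left]

end SimpleGraph.IsTree

lemma badCount_eq_ncard {V α : Type*} {G : SimpleGraph V} {c : V → α} {S : Set (Sym2 V)}
    (hS : S ⊆ G.edgeSet) (hc : ∀ ⦃u v : V⦄, G.Adj u v → (c u = c v ↔ s(u, v) ∈ S)) :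
    badCount G c = S.ncard := by
  unfold badCount
  congr 1
  ext e
  induction e using Sym2.ind with
  | _ u v =>
    simp only [Set.mem_ofPred_eq, Sym2.map_mk, Sym2.mk_isDiag_iff, SimpleGraph.mem_edgeSet]
    exact ⟨fun ⟨hadj, hcuv⟩ => (hc hadj).mp hcuv, fun he => ⟨hS he, (hc (hS he)).mpr he⟩⟩

theorem tree_two_coloring_exact_bad_edges_general {V : Type*} [Fintype V]
    (T : SimpleGraph V) (hT : T.IsTree) (n : ℕ) (hn : Fintype.card V = n)
    (k : ℕ) (hk : k ≤ n - 2) :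
    ∃ c : V → Fin 2, badCount T c = k := by
  classical
  have hedges : T.edgeFinset.card + 1 = n := hn ▸ hT.card_edgeFinset
  obtain ⟨S, hST, hSk⟩ := Finset.exists_subset_card_eq (show k ≤ T.edgeFinset.card by omega)
  obtain ⟨c, hc⟩ := hT.exists_coloring_adj_eq_iff_mem S
  refine ⟨c, ?_⟩
  rw [badCount_eq_ncard (fun e he => T.mem_edgeFinset.mp (hST he)) hc, Set.ncard_coe_finset, hSk]

/-- For a tree `T` on `n ≥ 1` vertices and any `0 ≤ k ≤ n - 2`, there is a
2-coloring of the vertices with exactly `k` monochromatic edges. -/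
theorem tree_two_coloring_exact_bad_edges {V : Type*} [Fintype V]
    (T : SimpleGraph V) (hT : T.IsTree) (n : ℕ) (hn : Fintype.card V = n)
    (hn1 : 1 ≤ n) (k : ℕ) (hk : k ≤ n - 2) :
    ∃ c : V → Fin 2, badCount T c = k :=
  tree_two_coloring_exact_bad_edges_general T hT n hn k hk
end

section
/- For the wheel W_n on n > 3 vertices (a cycle on n−1 vertices plus a center adjacent to all cycle vertices), every 2-coloring of the vertices has at least ⌊n/2⌋ monochromatic edges. -/
/-- The wheel graph with hub `none` and rim cycle on `Fin m` (for `m ≥ 3`);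
this is `W_n` with `n = m + 1` vertices and `2m = 2n - 2` edges. -/
def wheelGraph (m : ℕ) : SimpleGraph (Option (Fin m)) where
  Adj v w :=
    (v = none ∧ w ≠ none) ∨ (w = none ∧ v ≠ none) ∨
      (∃ a b : Fin m, v = some a ∧ w = some b ∧ a ≠ b ∧
        ((a.val + 1) % m = b.val ∨ (b.val + 1) % m = a.val))
  symm := by
    constructor
    rintro v w (⟨h1, h2⟩ | ⟨h1, h2⟩ | ⟨a, b, h1, h2, h3, h4⟩)
    · exact Or.inr (Or.inl ⟨h1, h2⟩)
    · exact Or.inl ⟨h1, h2⟩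
    · exact Or.inr (Or.inr ⟨b, a, h2, h1, h3.symm, h4.symm⟩)
  loopless := by
    constructor
    rintro v (⟨h1, h2⟩ | ⟨h1, h2⟩ | ⟨a, b, h1, h2, h3, h4⟩)
    · exact h2 h1
    · exact h2 h1
    · subst h1; exact h3 (Option.some_injective _ h2)

open Finset

lemma Fin.eq_or_eq_of_ne_of_fin_two {x y : Fin 2} (h : x ≠ y) (z : Fin 2) : x = z ∨ y = z := by
  revert x y z; decide

section ColorChanges

variable {G : Type*} [AddGroup G] [Fintype G] [DecidableEq G]

lemma card_color_changes_le_two_mul_card (d : G → Fin 2) (g : G) (X : Fin 2) :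
    #{a | d a ≠ d (a + g)} ≤ 2 * #{a | d a = X} := by
  have h_shift : #{a | d (a + g) = X} = #{a | d a = X} :=
    card_equiv (Equiv.addRight g) (by simp)
  calc #{a | d a ≠ d (a + g)}
      ≤ #(({a | d a = X} : Finset G) ∪ ({a | d (a + g) = X} : Finset G)) :=
        card_le_card fun a ha => by simpa using Fin.eq_or_eq_of_ne_of_fin_two (mem_filter.mp ha).2 X
    _ ≤ #{a | d a = X} + #{a | d (a + g) = X} := card_union_le _ _
    _ = 2 * #{a | d a = X} := by rw [h_shift, two_mul]

lemma card_color_add_card_monochromatic_shift_ge (d : G → Fin 2) (g : G) (X : Fin 2) :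
    (Fintype.card G + 1) / 2 ≤ #{a | d a = X} + #{a | d a = d (a + g)} := by
  have h_split : #{a | d a = d (a + g)} + #{a | d a ≠ d (a + g)} = Fintype.card G :=
    card_filter_add_card_filter_not _
  have := card_color_changes_le_two_mul_card d g X
  omega

end ColorChanges

namespace Fin

variable {m : ℕ} [NeZero m]

lemma add_one_ne_self (hm : 2 ≤ m) (a : Fin m) : a + 1 ≠ a := by
  rw [Ne, add_eq_left, Fin.ext_iff]
  simp [Nat.mod_eq_of_lt (show 1 < m by omega)]

lemma add_one_add_one_ne_self (hm : 3 ≤ m) (a : Fin m) : a + 1 + 1 ≠ a := by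
  rw [Ne, add_assoc, add_eq_left, Fin.ext_iff]
  simp [Fin.val_add, Nat.mod_eq_of_lt (show 1 < m by omega), Nat.mod_eq_of_lt (show 2 < m by omega)]

end Fin

section Wheel

variable {m : ℕ}

lemma wheelGraph_adj_none_some (a : Fin m) : (wheelGraph m).Adj none (some a) :=
  Or.inl ⟨rfl, Option.some_ne_none a⟩

lemma wheelGraph_adj_some_add_one [NeZero m] (hm : 2 ≤ m) (a : Fin m) :
    (wheelGraph m).Adj (some a) (some (a + 1)) :=
  Or.inr <| Or.inr ⟨a, a + 1, rfl, rfl, (Fin.add_one_ne_self hm a).symm,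
    Or.inl <| by simp [Fin.val_add, Nat.mod_eq_of_lt (show 1 < m by omega)]⟩

def wheelEdge [NeZero m] : Fin m ⊕ Fin m → Sym2 (Option (Fin m)) :=
  Sum.elim (fun a => s(none, some a)) (fun a => s(some a, some (a + 1)))

lemma wheelEdge_injective [NeZero m] (hm : 3 ≤ m) :
    Function.Injective (wheelEdge (m := m)) := by
  refine Function.Injective.sumElim ?_ ?_ ?_
  · intro a b h
    simpa using h
  · intro a b h
    rcases Sym2.eq_iff.mp h with ⟨hab, -⟩ | ⟨hab, hba⟩
    · exact Option.some_injective _ hab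
    · simp only [Option.some.injEq] at hab hba
      exact absurd (by rw [hba, ← hab]) (Fin.add_one_add_one_ne_self hm a)
  · intro a b h
    simp at h

lemma card_monochromatic_spokes_add_rim_le_badCount {α : Type*} [DecidableEq α] [NeZero m]
    (hm : 3 ≤ m) (c : Option (Fin m) → α) :
    #{a | c (some a) = c none} + #{a | c (some a) = c (some (a + 1))} ≤
      badCount (wheelGraph m) c := by
  rw [← card_disjSum, badCount, ← Set.ncard_coe_finset]
  refine Set.ncard_le_ncard_of_injOn wheelEdge ?_ (wheelEdge_injective hm).injOn (Set.toFinite _)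
  rintro (a | a) ha
  · refine ⟨wheelGraph_adj_none_some a, ?_⟩
    simpa [wheelEdge, eq_comm] using ha
  · refine ⟨wheelGraph_adj_some_add_one (by omega) a, ?_⟩
    simpa [wheelEdge] using ha

end Wheel

/-- Every 2-coloring of the wheel `W_n` (`n > 3`) has at least `⌊n/2⌋` monochromatic
edges. -/
theorem wheel_two_coloring_bad_edges_lower_bound (n : ℕ) (hn : 3 < n)
    (c : Option (Fin (n - 1)) → Fin 2) :
    n / 2 ≤ badCount (wheelGraph (n - 1)) c := by
  have hm : 3 ≤ n - 1 := by omega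
  have : NeZero (n - 1) := ⟨by omega⟩
  calc n / 2 = (Fintype.card (Fin (n - 1)) + 1) / 2 := by rw [Fintype.card_fin]; omega
    _ ≤ #{a | c (some a) = c none} + #{a | c (some a) = c (some (a + 1))} :=
      card_color_add_card_monochromatic_shift_ge (c ∘ some) 1 (c none)
    _ ≤ badCount (wheelGraph (n - 1)) c := card_monochromatic_spokes_add_rim_le_badCount hm c
end

section
/- For the wheel W_n on n > 3 vertices and every integer k with 1 ≤ k < ⌊n/2⌋, there exists a 3-coloring of the vertices of W_n with exactly k monochromatic edges, but no 2-coloring with exactly k monochromatic edges. -/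
/-!
Number the rim `Fin m` and use `finRotate m` as the rim successor. Every edge
is either a spoke `{hub, a}` or a rim edge `{a, a + 1}`, so the number of monochromatic edges is
`∑ a, ([c a = c hub] + [c a = c (a + 1)])`. With two colours, a bichromatic rim edge has an
endpoint of the hub's colour; summing over the rim gives `m ≤ 2 · badCount`, so every
2-colouring has at least `⌈m / 2⌉ = ⌊n / 2⌋` monochromatic edges. With three colours, an explicit
colouring makes the summand equal to `[a < k]`.
-/

open Finset

theorem badCount_eq_ncard_of_range_eq_edgeSet {V α ι : Type*} (G : SimpleGraph V) (c : V → α)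
    {f : ι → Sym2 V} (hf : f.Injective) (hrange : Set.range f = G.edgeSet) :
    badCount G c = {i | (Sym2.map c (f i)).IsDiag}.ncard := by
  have hbad : {e ∈ G.edgeSet | (Sym2.map c e).IsDiag} = f '' {i | (Sym2.map c (f i)).IsDiag} := by
    rw [← hrange]
    ext e
    constructor
    · rintro ⟨⟨i, rfl⟩, hi⟩
      exact ⟨i, hi, rfl⟩
    · rintro ⟨i, hi, rfl⟩
      exact ⟨⟨i, rfl⟩, hi⟩
  rw [badCount, hbad, Set.ncard_image_of_injective _ hf]

section finRotate

variable {m : ℕ}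

theorem val_finRotate_eq_or (a : Fin m) :
    (finRotate m a : ℕ) = a + 1 ∧ a + 1 < m ∨ (finRotate m a : ℕ) = 0 ∧ a + 1 = m := by
  obtain ⟨n, rfl⟩ : ∃ n, m = n + 1 := ⟨m - 1, by have := a.pos; omega⟩
  rw [coe_finRotate]
  split_ifs with h
  · simp [h]
  · have : (a : ℕ) < n := Fin.val_lt_last h
    omega

theorem val_finRotate (a : Fin m) : (finRotate m a : ℕ) = (a + 1) % m := by
  rcases val_finRotate_eq_or a with ⟨h, hlt⟩ | ⟨h, heq⟩
  · rw [h, Nat.mod_eq_of_lt hlt]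
  · rw [h, heq, Nat.mod_self]

theorem finRotate_ne_self (hm : 2 ≤ m) (a : Fin m) : finRotate m a ≠ a := by
  rw [ne_eq, Fin.ext_iff]
  rcases val_finRotate_eq_or a with h | h <;> omega

theorem finRotate_finRotate_ne_self (hm : 3 ≤ m) (a : Fin m) :
    finRotate m (finRotate m a) ≠ a := by
  rw [ne_eq, Fin.ext_iff]
  rcases val_finRotate_eq_or a with h | h <;>
    rcases val_finRotate_eq_or (finRotate m a) with h' | h' <;> omega

end finRotate

namespace wheelGraph

variable {m : ℕ}

def spoke (a : Fin m) : Sym2 (Option (Fin m)) := s(none, some a)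

def rimEdge (a : Fin m) : Sym2 (Option (Fin m)) := s(some a, some (finRotate m a))

def edge : Fin m ⊕ Fin m → Sym2 (Option (Fin m)) := Sum.elim spoke rimEdge

theorem adj_some_some (hm : 2 ≤ m) {a b : Fin m} :
    (wheelGraph m).Adj (some a) (some b) ↔ finRotate m a = b ∨ finRotate m b = a := by
  simp only [wheelGraph, reduceCtorEq, false_and, ne_eq, Option.some.injEq, exists_and_left,
    exists_eq_left', false_or, ← val_finRotate, ← Fin.ext_iff]
  constructor
  · exact fun h => h.2
  · rintro (rfl | rfl)
    · exact ⟨(finRotate_ne_self hm a).symm, Or.inl rfl⟩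
    · exact ⟨finRotate_ne_self hm b, Or.inr rfl⟩

theorem edge_injective (hm : 3 ≤ m) : (edge (m := m)).Injective := by
  rintro (a | a) (b | b) h <;>
    simp only [edge, Sum.elim_inl, Sum.elim_inr, spoke, rimEdge, Sym2.eq_iff, reduceCtorEq,
      false_and, and_false, or_false, Option.some.injEq, true_and] at h
  · rw [h]
  · rcases h with ⟨rfl, -⟩ | ⟨rfl, h⟩
    · rfl
    · exact absurd h (finRotate_finRotate_ne_self hm b)

theorem range_edge (hm : 2 ≤ m) : Set.range (edge (m := m)) = (wheelGraph m).edgeSet := by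
  ext e
  induction e using Sym2.ind with
  | _ v w =>
    rw [SimpleGraph.mem_edgeSet]
    rcases v with _ | a <;> rcases w with _ | b
    · simp [edge, spoke, rimEdge]
    · simp [edge, spoke, rimEdge, wheelGraph]
    · simp [edge, spoke, rimEdge, wheelGraph]
    · rw [adj_some_some hm]
      simp [edge, spoke, rimEdge, exists_or, -finRotate_apply]

theorem badCount_eq_sum (hm : 3 ≤ m) {α : Type*} [DecidableEq α] (c : Option (Fin m) → α) :
    badCount (wheelGraph m) c = ∑ a, ((if c (some a) = c none then 1 else 0) +
      if c (some a) = c (some (finRotate m a)) then 1 else 0) := by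
  rw [badCount_eq_ncard_of_range_eq_edgeSet _ c (edge_injective hm) (range_edge (by omega)),
    Set.ncard_eq_toFinset_card', Set.toFinset_ofPred, card_filter, Fintype.sum_sum_type,
    ← sum_add_distrib]
  simp only [edge, spoke, rimEdge, Sum.elim_inl, Sum.elim_inr, Sym2.map_mk, Sym2.mk_isDiag_iff,
    eq_comm]

theorem le_two_mul_badCount (hm : 3 ≤ m) (c : Option (Fin m) → Fin 2) :
    m ≤ 2 * badCount (wheelGraph m) c := by
  set spokeBad : Fin m → ℕ := fun a => if c (some a) = c none then 1 else 0
  set rimBad : Fin m → ℕ := fun a => if c (some a) = c (some (finRotate m a)) then 1 else 0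
  have hcover (a : Fin m) : 1 ≤ spokeBad a + spokeBad (finRotate m a) + rimBad a := by
    simp only [spokeBad, rimBad]
    generalize c (some a) = x, c (some (finRotate m a)) = y, c none = z
    revert x y z
    decide
  have hrot : ∑ a, spokeBad (finRotate m a) = ∑ a, spokeBad a :=
    Equiv.sum_comp (finRotate m) spokeBad
  calc m = ∑ _a : Fin m, 1 := by simp
    _ ≤ ∑ a, (spokeBad a + spokeBad (finRotate m a) + rimBad a) := sum_le_sum fun a _ => hcover a
    _ = 2 * ∑ a, spokeBad a + ∑ a, rimBad a := by
      rw [sum_add_distrib, sum_add_distrib, hrot]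
      ring
    _ ≤ 2 * (∑ a, spokeBad a + ∑ a, rimBad a) := by omega
    _ = 2 * badCount (wheelGraph m) c := by rw [badCount_eq_sum hm, sum_add_distrib]

/-- The hub gets colour `2`; rim vertices `0, …, k` get colour `0` (truncated subtraction makes
`a - k = 0` there), after which the rim alternates `1, 0, 1, …`. When `m - k` is odd this
alternation would close up with a monochromatic edge `{m - 1, 0}`, so vertex `0` takes the hub's
colour instead, trading the rim edge `{0, 1}` for the spoke at `0`. -/
def threeColoring (m k : ℕ) : Option (Fin m) → Fin 3
  | none => 2
  | some a => if (a : ℕ) < (m - k) % 2 then 2 else if ((a : ℕ) - k) % 2 = 0 then 0 else 1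

theorem threeColoring_local {k : ℕ} (hk1 : 1 ≤ k) (hk2 : k + 2 ≤ m) (a : Fin m) :
    ((if threeColoring m k (some a) = threeColoring m k none then 1 else 0) +
      if threeColoring m k (some a) = threeColoring m k (some (finRotate m a)) then 1 else 0) =
      if (a : ℕ) < k then 1 else 0 := by
  have := a.isLt
  have := val_finRotate_eq_or a
  simp only [threeColoring]
  split_ifs <;> first | rfl | omega

theorem badCount_threeColoring {k : ℕ} (hk1 : 1 ≤ k) (hk2 : k + 2 ≤ m) :
    badCount (wheelGraph m) (threeColoring m k) = k := by
  rw [badCount_eq_sum (by omega), sum_congr rfl fun a _ => threeColoring_local hk1 hk2 a,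
    ← card_filter, Fin.card_filter_val_lt, min_eq_right (by omega)]

end wheelGraph

theorem wheel_three_coloring_exact_bad_edges_general (n : ℕ)
    (k : ℕ) (hk1 : 1 ≤ k) (hk2 : k < n / 2) :
    (∃ c : Option (Fin (n - 1)) → Fin 3, badCount (wheelGraph (n - 1)) c = k) ∧
    ¬ ∃ c : Option (Fin (n - 1)) → Fin 2, badCount (wheelGraph (n - 1)) c = k := by
  refine ⟨⟨_, wheelGraph.badCount_threeColoring hk1 (by omega)⟩, ?_⟩
  rintro ⟨c, hc⟩
  have := wheelGraph.le_two_mul_badCount (by omega) c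
  omega

/-- For every `1 ≤ k < ⌊n/2⌋` the wheel `W_n` (`n > 3`) has a 3-coloring with exactly
`k` monochromatic edges, but no 2-coloring with exactly `k` monochromatic edges. -/
theorem wheel_three_coloring_exact_bad_edges (n : ℕ) (hn : 3 < n)
    (k : ℕ) (hk1 : 1 ≤ k) (hk2 : k < n / 2) :
    (∃ c : Option (Fin (n - 1)) → Fin 3, badCount (wheelGraph (n - 1)) c = k) ∧
    ¬ ∃ c : Option (Fin (n - 1)) → Fin 2, badCount (wheelGraph (n - 1)) c = k :=
  wheel_three_coloring_exact_bad_edges_general n k hk1 hk2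
end
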